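/- (Consequence of approximate Gram preservation) If ‖ΨᵀΠΠᵀΨ − ΨᵀΨ‖ ≤ 1/2 and Ψ = UΣ^{1/2}Σ̄^{-1/2}, B = UΣ^{1/2}Vᵀ, Σ̄ = Σ + λI, then (1/2)BᵀB − (λ/2)I ⪯ BᵀΠΠᵀB ⪯ (3/2)BᵀB + (λ/2)I. -/

import Mathlib

open scoped Matrix Matrix.Norms.L2Operator

lemma psd_half_add_of_norm_le {m : ℕ} (E : Matrix (Fin m) (Fin m) ℝ) (hE : E.IsHermitian)
    (h : ‖E‖ ≤ 1/2) : ((1/2 : ℝ) • (1 : Matrix (Fin m) (Fin m) ℝ) + E).PosSemidef := by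
  rw [Matrix.posSemidef_iff_dotProduct_mulVec]
  constructor
  · have : ((1/2 : ℝ) • (1 : Matrix (Fin m) (Fin m) ℝ)).IsHermitian := by
      unfold Matrix.IsHermitian
      rw [Matrix.conjTranspose_smul, Matrix.conjTranspose_one, star_trivial]
    exact this.add hE
  · intro x
    have key : |x ⬝ᵥ (E *ᵥ x)| ≤ (1/2) * (x ⬝ᵥ x) := by
      set y : EuclideanSpace ℝ (Fin m) := (EuclideanSpace.equiv (Fin m) ℝ).symm x with hy
      set z : EuclideanSpace ℝ (Fin m) := (EuclideanSpace.equiv (Fin m) ℝ).symm (E *ᵥ x) with hz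
      have h1 : x ⬝ᵥ (E *ᵥ x) = inner ℝ y z := by
        simp [hy, hz, PiLp.inner_apply, dotProduct, RCLike.inner_apply, mul_comm]
      have h2 : x ⬝ᵥ x = ‖y‖^2 := by
        rw [← real_inner_self_eq_norm_sq]
        simp [hy, PiLp.inner_apply, dotProduct, RCLike.inner_apply, mul_comm,
          EuclideanSpace.norm_sq_eq, ← pow_two]
      rw [h1, h2]
      calc |inner ℝ y z| ≤ ‖y‖ * ‖z‖ := abs_real_inner_le_norm y z
        _ ≤ ‖y‖ * (‖E‖ * ‖y‖) := by
            gcongr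
            exact Matrix.l2_opNorm_mulVec E y
        _ ≤ ‖y‖ * ((1/2) * ‖y‖) := by gcongr
        _ = 1/2 * ‖y‖^2 := by ring
    have habs := abs_le.mp key
    simp only [Matrix.add_mulVec, Matrix.smul_mulVec, Matrix.one_mulVec,
      dotProduct_add, dotProduct_smul, star_trivial, smul_eq_mul]
    nlinarith [habs.1, Finset.sum_nonneg (fun i (_ : i ∈ Finset.univ) => mul_self_nonneg (x i)), habs.2]

/-- If `‖ΨᵀΠΠᵀΨ - ΨᵀΨ‖ ≤ 1/2` where `Ψ = U Σ^{1/2} (Σ + λI)^{-1/2}` and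
`B = U Σ^{1/2} Vᵀ`, then `(1/2) BᵀB - (λ/2) I ⪯ BᵀΠΠᵀB ⪯ (3/2) BᵀB + (λ/2) I`. -/
theorem approx_gram_sandwich (m d : ℕ)
    (U V : Matrix (Fin m) (Fin m) ℝ)
    (hU : U * Uᵀ = 1 ∧ Uᵀ * U = 1) (hV : V * Vᵀ = 1 ∧ Vᵀ * V = 1)
    (sigma : Fin m → ℝ) (hsigma : ∀ i, 0 ≤ sigma i)
    (lam : ℝ) (hlam : 0 < lam)
    (B Psi : Matrix (Fin m) (Fin m) ℝ)
    (hB : B = U * Matrix.diagonal (fun i => Real.sqrt (sigma i)) * Vᵀ)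
    (hPsi : Psi = U * Matrix.diagonal (fun i =>
      Real.sqrt (sigma i) * (Real.sqrt (sigma i + lam))⁻¹))
    (Pi : Matrix (Fin m) (Fin d) ℝ)
    (hclose : ‖Psiᵀ * Pi * Piᵀ * Psi - Psiᵀ * Psi‖ ≤ 1 / 2) :
    (Bᵀ * Pi * Piᵀ * B -
      ((1 / 2 : ℝ) • (Bᵀ * B) - (lam / 2) • (1 : Matrix (Fin m) (Fin m) ℝ))).PosSemidef ∧
    (((3 / 2 : ℝ) • (Bᵀ * B) + (lam / 2) • (1 : Matrix (Fin m) (Fin m) ℝ)) -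
      Bᵀ * Pi * Piᵀ * B).PosSemidef := by
  set Ds := Matrix.diagonal (fun i => Real.sqrt (sigma i)) with hDs
  set Dbar := Matrix.diagonal (fun i => Real.sqrt (sigma i + lam)) with hDbar
  set S := V * Dbar with hS
  have hDD : Dbar * Matrix.diagonal (fun i =>
      Real.sqrt (sigma i) * (Real.sqrt (sigma i + lam))⁻¹) = Ds := by
    rw [hDbar, hDs, Matrix.diagonal_mul_diagonal]
    have : (fun i => Real.sqrt (sigma i + lam) * (Real.sqrt (sigma i) * (Real.sqrt (sigma i + lam))⁻¹))
        = fun i => Real.sqrt (sigma i) := by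
      funext i
      have h : Real.sqrt (sigma i + lam) ≠ 0 :=
        ne_of_gt (Real.sqrt_pos.mpr (by have := hsigma i; linarith))
      rw [mul_comm (Real.sqrt (sigma i)) _, ← mul_assoc, mul_inv_cancel₀ h, one_mul]
    rw [this]
  have hSt : Sᵀ = Dbar * Vᵀ := by
    rw [hS, Matrix.transpose_mul, hDbar, Matrix.diagonal_transpose]
  have hBt : Bᵀ = S * Psiᵀ := by
    rw [hB, hPsi, hS]
    simp only [Matrix.transpose_mul, Matrix.transpose_transpose, Matrix.diagonal_transpose]
    rw [hDs, Matrix.diagonal_transpose, ← hDs,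
      Matrix.mul_assoc V Dbar, ← Matrix.mul_assoc Dbar, hDD]
  have hBeq : B = Psi * Sᵀ := by
    have := congrArg Matrix.transpose hBt
    rwa [Matrix.transpose_transpose, Matrix.transpose_mul] at this
  have hP : Bᵀ * Pi * Piᵀ * B = S * (Psiᵀ * Pi * Piᵀ * Psi) * Sᵀ := by
    rw [hBt]; nth_rewrite 1 [hBeq]
    simp [Matrix.mul_assoc]
  have hG : Bᵀ * B = S * (Psiᵀ * Psi) * Sᵀ := by
    rw [hBt]; nth_rewrite 1 [hBeq]
    simp [Matrix.mul_assoc]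
  have hDbar2 : Dbar * Dbar = Ds * Ds + lam • (1 : Matrix (Fin m) (Fin m) ℝ) := by
    rw [hDbar, hDs, Matrix.diagonal_mul_diagonal, Matrix.diagonal_mul_diagonal]
    ext i j
    rcases eq_or_ne i j with rfl | hij
    · simp [Matrix.diagonal_apply_eq, Real.mul_self_sqrt (hsigma i),
        Real.mul_self_sqrt (by have := hsigma i; linarith : (0:ℝ) ≤ sigma i + lam)]
    · simp [Matrix.diagonal_apply_ne _ hij, Matrix.one_apply_ne hij]
  have hSS : S * Sᵀ = Bᵀ * B + lam • (1 : Matrix (Fin m) (Fin m) ℝ) := by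
    have h1 : S * Sᵀ = V * (Dbar * Dbar) * Vᵀ := by
      rw [hSt, hS]; simp [Matrix.mul_assoc]
    have h2 : Bᵀ * B = V * (Ds * Ds) * Vᵀ := by
      rw [hB]
      simp only [Matrix.transpose_mul, Matrix.transpose_transpose]
      rw [hDs, Matrix.diagonal_transpose, ← hDs]
      rw [show V * (Ds * Uᵀ) * (U * Ds * Vᵀ) = V * (Ds * ((Uᵀ * U) * (Ds * Vᵀ))) by
        simp [Matrix.mul_assoc], hU.2, Matrix.one_mul]
      simp [Matrix.mul_assoc]
    rw [h1, h2, hDbar2, Matrix.mul_add, Matrix.add_mul]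
    congr 1
    rw [mul_smul_comm, Matrix.mul_one, smul_mul_assoc, hV.1]
  have hEH : (Psiᵀ * Pi * Piᵀ * Psi - Psiᵀ * Psi).IsHermitian := by
    have h1 : (Psiᵀ * Pi * Piᵀ * Psi).IsHermitian := by
      have := Matrix.isHermitian_mul_conjTranspose_self (Psiᵀ * Pi)
      rwa [Matrix.conjTranspose_eq_transpose_of_trivial, Matrix.transpose_mul,
        Matrix.transpose_transpose, ← Matrix.mul_assoc] at this
    have h2 : (Psiᵀ * Psi).IsHermitian := by
      have := Matrix.isHermitian_mul_conjTranspose_self Psiᵀ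
      rwa [Matrix.conjTranspose_eq_transpose_of_trivial, Matrix.transpose_transpose] at this
    exact h1.sub h2
  set E := Psiᵀ * Pi * Piᵀ * Psi - Psiᵀ * Psi with hEdef
  have hpos1 : ((1/2 : ℝ) • (1 : Matrix (Fin m) (Fin m) ℝ) + E).PosSemidef :=
    psd_half_add_of_norm_le E hEH hclose
  have hpos2 : ((1/2 : ℝ) • (1 : Matrix (Fin m) (Fin m) ℝ) + (-E)).PosSemidef :=
    psd_half_add_of_norm_le (-E) hEH.neg (by rw [norm_neg]; exact hclose)
  have g1 : Bᵀ * Pi * Piᵀ * B -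
      ((1 / 2 : ℝ) • (Bᵀ * B) - (lam / 2) • (1 : Matrix (Fin m) (Fin m) ℝ))
      = S * ((1/2 : ℝ) • (1 : Matrix (Fin m) (Fin m) ℝ) + E) * Sᵀ := by
    rw [hEdef, Matrix.mul_add, Matrix.add_mul, Matrix.mul_sub, Matrix.sub_mul, ← hP, ← hG,
      mul_smul_comm, Matrix.mul_one, smul_mul_assoc, hSS]
    module
  have g2 : ((3 / 2 : ℝ) • (Bᵀ * B) + (lam / 2) • (1 : Matrix (Fin m) (Fin m) ℝ)) -
      Bᵀ * Pi * Piᵀ * B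
      = S * ((1/2 : ℝ) • (1 : Matrix (Fin m) (Fin m) ℝ) + (-E)) * Sᵀ := by
    rw [hEdef, Matrix.mul_add, Matrix.add_mul, Matrix.mul_neg, Matrix.neg_mul,
      Matrix.mul_sub, Matrix.sub_mul, ← hP, ← hG,
      mul_smul_comm, Matrix.mul_one, smul_mul_assoc, hSS]
    module
  constructor
  · rw [g1, ← Matrix.conjTranspose_eq_transpose_of_trivial]
    exact hpos1.mul_mul_conjTranspose_same S
  · rw [g2, ← Matrix.conjTranspose_eq_transpose_of_trivial]
    exact hpos2.mul_mul_conjTranspose_same S
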